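/- arXiv:2410.17791 — 4 statements merged into one kernel-verified Lean document; each statement's English description precedes it below -/
import Mathlib

section
/- If W is positive definite, then the top-left entry of the inverse does not decrease when the extra row and column are appended: (W⁻¹)₀₀ ≥ (V⁻¹)₀₀, where (M⁻¹)₀₀ denotes the (0,0) entry of M⁻¹. -/
open Matrix

/-- The `(n+2) × (n+2)` symmetric block matrix `W = [[V, ψ], [ψᵀ, α]]`. -/
def blockW (n : ℕ) (V : Matrix (Fin (n+1)) (Fin (n+1)) ℝ)
    (ψ : Fin (n+1) → ℝ) (α : ℝ) :
    Matrix (Fin (n+1) ⊕ Fin 1) (Fin (n+1) ⊕ Fin 1) ℝ :=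
  Matrix.fromBlocks V (Matrix.of fun i _ => ψ i) (Matrix.of fun _ j => ψ j)
    (Matrix.of fun _ _ => α)

namespace Matrix.PosDef

variable {m n K : Type*} [Fintype m] [Fintype n] [DecidableEq m] [DecidableEq n]
  [Field K] [PartialOrder K] [StarRing K] [StarOrderedRing K]

theorem posSemidef_inv_toBlocks₁₁_sub_inv {A : Matrix m m K} {B : Matrix m n K}
    {D : Matrix n n K} (h : (fromBlocks A B Bᴴ D).PosDef) :
    ((fromBlocks A B Bᴴ D)⁻¹.toBlocks₁₁ - A⁻¹).PosSemidef := by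
  have hA : A.PosDef := h.submatrix Sum.inl_injective
  have := hA.isUnit.invertible
  have := h.isUnit.invertible
  have := invertibleOfFromBlocks₁₁Invertible A B Bᴴ D
  have hS : (D - Bᴴ * A⁻¹ * B).PosSemidef := (fromBlocks₁₁ B D hA).1 h.posSemidef
  -- The Schur complement formula leaves `A⁻¹ B S⁻¹ Bᴴ A⁻¹` with `S = D - Bᴴ A⁻¹ B ⪰ 0`.
  rw [← invOf_eq_nonsing_inv (fromBlocks A B Bᴴ D), invOf_fromBlocks₁₁_eq, toBlocks_fromBlocks₁₁]
  simp only [invOf_eq_nonsing_inv, add_sub_cancel_left]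
  simpa [Matrix.mul_assoc, hA.1.inv.eq] using hS.inv.conjTranspose_mul_mul_same (Bᴴ * A⁻¹)

end Matrix.PosDef

theorem stmt4_general (n : ℕ) (V : Matrix (Fin (n+1)) (Fin (n+1)) ℝ)
    (ψ : Fin (n+1) → ℝ) (α : ℝ)
    (hW : (blockW n V ψ α).PosDef) :
    (blockW n V ψ α)⁻¹ (Sum.inl 0) (Sum.inl 0) ≥ V⁻¹ 0 0 :=
  sub_nonneg.1 (PosDef.posSemidef_inv_toBlocks₁₁_sub_inv hW).diag_nonneg

/-- If `W = [[V, ψ], [ψᵀ, α]]` is positive definite, then the `(0,0)` entry of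
the inverse does not decrease when the extra row and column are appended:
`(W⁻¹)₀₀ ≥ (V⁻¹)₀₀`. -/
theorem stmt4 (n : ℕ) (V : Matrix (Fin (n+1)) (Fin (n+1)) ℝ)
    (ψ : Fin (n+1) → ℝ) (α : ℝ)
    (hV : V.PosDef) (hW : (blockW n V ψ α).PosDef) :
    (blockW n V ψ α)⁻¹ (Sum.inl 0) (Sum.inl 0) ≥ V⁻¹ 0 0 :=
  stmt4_general n V ψ α hW
end

section
/- Suppose W is positive definite and ⟨ψ, V⁻¹ e₀⟩ ≠ 0, where e₀ ∈ ℝ^{n+1} is the first standard basis vector. Let β > 0 be a real number and define β' = ((V⁻¹)₀₀ / (W⁻¹)₀₀) · β, so that β' (W⁻¹)₀₀ = β (V⁻¹)₀₀. Then 0 < β' < β. (This is Eq. (37) of the paper: the critical parameter for a tipping point strictly decreases when one more bet-hedger is introduced.) -/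
/-!
Since `e ⬝ᵥ M⁻¹ *ᵥ e = max_v (2 v ⬝ᵥ e - v ⬝ᵥ M *ᵥ v)` for positive definite `M`, with the maximum
attained only at `v = M⁻¹ *ᵥ e`, testing `W` against the vector `v = (V⁻¹ e₀, 0)` gives
`(V⁻¹)₀₀ ≤ (W⁻¹)₀₀`. Equality would force `W v = e₀`, but the last coordinate of `W v` is
`⟨ψ, V⁻¹ e₀⟩ ≠ 0`. Hence `0 < (V⁻¹)₀₀ < (W⁻¹)₀₀`, i.e. `0 < β' / β < 1`.
-/

open Matrix

namespace Matrix

variable {ι : Type*} [Fintype ι] [DecidableEq ι]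

theorem mulVec_nonsing_inv_mulVec {R : Type*} [CommRing R] {M : Matrix ι ι R}
    (hM : IsUnit M.det) (e : ι → R) : M *ᵥ (M⁻¹ *ᵥ e) = e := by
  rw [mulVec_mulVec, mul_nonsing_inv _ hM, one_mulVec]

/-- With `u = M⁻¹ *ᵥ e`, the gap is `(u - v) ⬝ᵥ M *ᵥ (u - v)`. -/
theorem PosDef.two_mul_dotProduct_sub_lt_dotProduct_inv_mulVec {M : Matrix ι ι ℝ}
    (hM : M.PosDef) {e v : ι → ℝ} (hv : M *ᵥ v ≠ e) :
    2 * (v ⬝ᵥ e) - v ⬝ᵥ (M *ᵥ v) < e ⬝ᵥ (M⁻¹ *ᵥ e) := by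
  set u := M⁻¹ *ᵥ e
  have hu : M *ᵥ u = e := mulVec_nonsing_inv_mulVec ((isUnit_iff_isUnit_det M).1 hM.isUnit) e
  have hMt : Mᵀ = M := by simpa using hM.1.eq
  have hsymm : ∀ x y, x ⬝ᵥ (M *ᵥ y) = y ⬝ᵥ (M *ᵥ x) := fun x y => by
    rw [dotProduct_mulVec, ← mulVec_transpose, hMt, dotProduct_comm]
  have hpos := hM.dotProduct_mulVec_pos (x := u - v) (sub_ne_zero.2 (by rintro rfl; exact hv hu))
  simp only [star_trivial, mulVec_sub, sub_dotProduct, dotProduct_sub, hu] at hpos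
  rw [hsymm u v, hu, dotProduct_comm u e] at hpos
  linarith

end Matrix

section blockW

variable {n : ℕ} {V : Matrix (Fin (n+1)) (Fin (n+1)) ℝ} {ψ : Fin (n+1) → ℝ} {α : ℝ}

theorem Matrix.PosDef.of_blockW (hW : (blockW n V ψ α).PosDef) : V.PosDef :=
  hW.submatrix Sum.inl_injective

theorem blockW_mulVec_sum_elim_zero (x : Fin (n+1) → ℝ) :
    blockW n V ψ α *ᵥ Sum.elim x 0 = Sum.elim (V *ᵥ x) fun _ => ψ ⬝ᵥ x := by
  ext (i | i) <;> simp [blockW, mulVec, dotProduct]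

theorem inv_apply_lt_blockW_inv_apply (hW : (blockW n V ψ α).PosDef) (i : Fin (n+1))
    (hψ : ψ ⬝ᵥ (V⁻¹ *ᵥ Pi.single i 1) ≠ 0) :
    V⁻¹ i i < (blockW n V ψ α)⁻¹ (Sum.inl i) (Sum.inl i) := by
  set x := V⁻¹ *ᵥ Pi.single i 1
  have hVx : V *ᵥ x = Pi.single i 1 :=
    mulVec_nonsing_inv_mulVec ((isUnit_iff_isUnit_det V).1 hW.of_blockW.isUnit) _
  set v : Fin (n+1) ⊕ Fin 1 → ℝ := Sum.elim x 0
  have hne : blockW n V ψ α *ᵥ v ≠ Pi.single (Sum.inl i) 1 := fun h => by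
    have := congrFun h (Sum.inr 0)
    simp [v, blockW_mulVec_sum_elim_zero, hψ] at this
  have hve : v ⬝ᵥ Pi.single (Sum.inl i) 1 = V⁻¹ i i := by simp [v, x]
  have hvWv : v ⬝ᵥ (blockW n V ψ α *ᵥ v) = V⁻¹ i i := by
    rw [blockW_mulVec_sum_elim_zero, hVx, ← hve]
    simp [v, dotProduct, Fintype.sum_sum_type, Pi.single_apply]
  have key := hW.two_mul_dotProduct_sub_lt_dotProduct_inv_mulVec hne
  rw [hve, hvWv, single_one_dotProduct, mulVec_single_one, col_apply] at key
  linarith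

end blockW

theorem stmt6_general (n : ℕ) (V : Matrix (Fin (n+1)) (Fin (n+1)) ℝ)
    (ψ : Fin (n+1) → ℝ) (α : ℝ)
    (hW : (blockW n V ψ α).PosDef)
    (hψ : ψ ⬝ᵥ (V⁻¹ *ᵥ Pi.single 0 1) ≠ 0)
    (β : ℝ) (hβ : 0 < β) :
    0 < (V⁻¹ 0 0 / (blockW n V ψ α)⁻¹ (Sum.inl 0) (Sum.inl 0)) * β
    ∧ (V⁻¹ 0 0 / (blockW n V ψ α)⁻¹ (Sum.inl 0) (Sum.inl 0)) * β < β := by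
  have hV₀ : 0 < V⁻¹ 0 0 := hW.of_blockW.inv.diag_pos
  have hlt := inv_apply_lt_blockW_inv_apply hW 0 hψ
  have hW₀ := hV₀.trans hlt
  have hratio : V⁻¹ 0 0 / (blockW n V ψ α)⁻¹ (Sum.inl 0) (Sum.inl 0) < 1 :=
    (div_lt_one hW₀).2 hlt
  exact ⟨mul_pos (div_pos hV₀ hW₀) hβ, by simpa using mul_lt_mul_of_pos_right hratio hβ⟩

/-- Eq. (37) of the paper: if `W = [[V, ψ], [ψᵀ, α]]` is positive definite and
`⟨ψ, V⁻¹ e₀⟩ ≠ 0`, then for `β > 0` the rescaled parameter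
`β' = ((V⁻¹)₀₀ / (W⁻¹)₀₀) · β` (so that `β' (W⁻¹)₀₀ = β (V⁻¹)₀₀`) satisfies
`0 < β' < β`. -/
theorem stmt6 (n : ℕ) (V : Matrix (Fin (n+1)) (Fin (n+1)) ℝ)
    (ψ : Fin (n+1) → ℝ) (α : ℝ)
    (hV : V.PosDef) (hW : (blockW n V ψ α).PosDef)
    (hψ : ψ ⬝ᵥ (V⁻¹ *ᵥ Pi.single 0 1) ≠ 0)
    (β : ℝ) (hβ : 0 < β) :
    0 < (V⁻¹ 0 0 / (blockW n V ψ α)⁻¹ (Sum.inl 0) (Sum.inl 0)) * β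
    ∧ (V⁻¹ 0 0 / (blockW n V ψ α)⁻¹ (Sum.inl 0) (Sum.inl 0)) * β < β :=
  stmt6_general n V ψ α hW hψ β hβ
end

section
/- Let β̃, k₂ ≥ 0, k₁ > 0, k₃ ≥ 0, and R > k₃ be real numbers. Define n(x) = (1 + exp(β̃((x − k₁)² − (x − k₂ tanh x − k₃ x)²)))⁻¹ and F(x) = (1/R)(n(x)·k₁ + (1 − n(x))·(k₂ tanh x + k₃ x)). Suppose x₀ > 0 satisfies R x₀ ≥ k₁ and x₀(R − k₃) ≥ k₂ tanh x₀. Then there exists x* with 0 < x* ≤ x₀ and F(x*) = x*. (All fixed points of the steady-state fitness dynamics lie in [0, x₀], and one exists there.) -/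
/-- Fraction of phenotype 1 at the fixed point:
`n(x) = (1 + exp(β̃((x − k₁)² − (x − k₂ tanh x − k₃ x)²)))⁻¹`. -/
noncomputable def nFrac (βt k₁ k₂ k₃ : ℝ) (x : ℝ) : ℝ :=
  (1 + Real.exp (βt * ((x - k₁) ^ 2 - (x - k₂ * Real.tanh x - k₃ * x) ^ 2)))⁻¹

/-- The one-dimensional steady-state fitness map
`F(x) = (1/R)(n(x)·k₁ + (1 − n(x))·(k₂ tanh x + k₃ x))`. -/
noncomputable def Fmap (βt k₁ k₂ k₃ R : ℝ) (x : ℝ) : ℝ :=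
  (1 / R) * (nFrac βt k₁ k₂ k₃ x * k₁
    + (1 - nFrac βt k₁ k₂ k₃ x) * (k₂ * Real.tanh x + k₃ * x))

lemma nFrac_pos (βt k₁ k₂ k₃ x : ℝ) : 0 < nFrac βt k₁ k₂ k₃ x := by
  unfold nFrac
  positivity

lemma nFrac_le_one (βt k₁ k₂ k₃ x : ℝ) : nFrac βt k₁ k₂ k₃ x ≤ 1 := by
  unfold nFrac
  rw [inv_le_one_iff₀]
  right
  nlinarith [Real.exp_pos (βt * ((x - k₁) ^ 2 - (x - k₂ * Real.tanh x - k₃ * x) ^ 2))]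

lemma tanh_cont : Continuous Real.tanh := by
  have h : Real.tanh = fun x => Real.sinh x / Real.cosh x :=
    funext fun x => Real.tanh_eq_sinh_div_cosh x
  rw [h]
  exact Real.continuous_sinh.div Real.continuous_cosh fun x => (Real.cosh_pos x).ne'

lemma nFrac_cont (βt k₁ k₂ k₃ : ℝ) : Continuous (nFrac βt k₁ k₂ k₃) := by
  apply Continuous.inv₀
  · have := tanh_cont; fun_prop
  · intro x
    have := Real.exp_pos (βt * ((x - k₁) ^ 2 - (x - k₂ * Real.tanh x - k₃ * x) ^ 2))
    positivity

/-- Existence of a fixed point of the steady-state fitness dynamics in `(0, x₀]`: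
if `R x₀ ≥ k₁` and `x₀ (R − k₃) ≥ k₂ tanh x₀` for some `x₀ > 0`, then there is
`x*` with `0 < x* ≤ x₀` and `F(x*) = x*`. -/
theorem stmt13 (βt k₁ k₂ k₃ R : ℝ) (hβt : 0 ≤ βt) (hk₁ : 0 < k₁) (hk₂ : 0 ≤ k₂)
    (hk₃ : 0 ≤ k₃) (hR : k₃ < R) (x₀ : ℝ) (hx₀ : 0 < x₀)
    (h1 : k₁ ≤ R * x₀) (h2 : k₂ * Real.tanh x₀ ≤ x₀ * (R - k₃)) :
    ∃ x : ℝ, 0 < x ∧ x ≤ x₀ ∧ Fmap βt k₁ k₂ k₃ R x = x := by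
  have hRpos : 0 < R := lt_of_le_of_lt hk₃ hR
  set g : ℝ → ℝ := fun x => Fmap βt k₁ k₂ k₃ R x - x with hg
  have hcont : Continuous g := by
    unfold g
    unfold Fmap
    have := nFrac_cont βt k₁ k₂ k₃
    have := tanh_cont; fun_prop
  have hg0 : 0 < g 0 := by
    have hn := nFrac_pos βt k₁ k₂ k₃ 0
    simp only [hg, Fmap, Real.tanh_zero]
    have : 0 < (1 / R) * (nFrac βt k₁ k₂ k₃ 0 * k₁) := by positivity
    nlinarith
  have hgx₀ : g x₀ ≤ 0 := by
    have hn1 := nFrac_pos βt k₁ k₂ k₃ x₀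
    have hn2 := nFrac_le_one βt k₁ k₂ k₃ x₀
    simp only [hg, Fmap]
    rw [sub_nonpos, div_mul_eq_mul_div, div_le_iff₀ hRpos]
    set n := nFrac βt k₁ k₂ k₃ x₀
    have hy : k₂ * Real.tanh x₀ + k₃ * x₀ ≤ R * x₀ := by nlinarith
    nlinarith
  have hsub : Set.Icc (g x₀) (g 0) ⊆ g '' Set.Icc 0 x₀ :=
    intermediate_value_Icc' hx₀.le hcont.continuousOn
  have h0mem : (0 : ℝ) ∈ Set.Icc (g x₀) (g 0) := ⟨hgx₀, hg0.le⟩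
  obtain ⟨x, hxmem, hxg⟩ := hsub h0mem
  refine ⟨x, ?_, hxmem.2, by linarith [sub_eq_zero.mp hxg]⟩
  rcases hxmem.1.lt_or_eq with h | h
  · exact h
  · exfalso; rw [← h] at hxg; linarith
end

section
/- Let c₁ and c₃ be real numbers. Every complex root λ of the polynomial λ³ − c₁ λ² − c₃ satisfies |λ| < 1 if and only if |c₁ + c₃| < 1 and |c₁ c₃| < 1 − c₃². (This is the Schur–Cohn stability criterion, Eq. (35), characterizing asymptotic stability of a fixed point of the linearized fitness dynamics y_t = c₁ y_{t−1} + c₃ y_{t−3}.) -/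
/-!
A real cubic has a real root `r`, and with `b = r - c₁` we get
`λ³ - c₁λ² - c₃ = (λ - r)(λ² + bλ + rb)`. So the roots lie in the open unit disc iff `|r| < 1`
and the quadratic factor `q` satisfies the Schur–Cohn conditions `rb < 1`, `q(1) > 0`,
`q(-1) > 0`; these are forced by the real roots (quadratic formula) and the product of the
complex roots of `q`. The translation to `c₁, c₃` rests on `1 ∓ (c₁ + c₃) = (1 ∓ r) q(±1)`
and on similar factorizations of `1 - c₃² ± c₁c₃`; conversely, `r ≥ 1` is ruled out because
these conditions would force `r³ < 1`, and `r ≤ -1` by the symmetry `(r, b) ↦ (-r, -b)`.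
-/

open Filter

lemma exists_cubic_factorization (c₁ c₃ : ℝ) : ∃ r b : ℝ, c₁ = r - b ∧ c₃ = r ^ 2 * b := by
  have hsurj : Function.Surjective fun x : ℝ => x * x * (x - c₁) - c₃ := by
    refine Continuous.surjective (by fun_prop) ?_ ?_
    · exact tendsto_atTop_add_const_right _ _ <|
        (tendsto_id.atTop_mul_atTop₀ tendsto_id).atTop_mul_atTop₀
          (tendsto_atTop_add_const_right _ _ tendsto_id)
    · exact tendsto_atBot_add_const_right _ _ <|
        (tendsto_id.atBot_mul_atBot₀ tendsto_id).atTop_mul_atBot₀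
          (tendsto_atBot_add_const_right _ _ tendsto_id)
  obtain ⟨r, hr⟩ := hsurj 0
  exact ⟨r, r - c₁, by ring, by linear_combination -hr⟩

lemma Complex.exists_quadratic_eq_mul (b c : ℂ) :
    ∃ z₁ z₂ : ℂ, ∀ z, z ^ 2 + b * z + c = (z - z₁) * (z - z₂) := by
  obtain ⟨s, hs⟩ := IsAlgClosed.exists_pow_nat_eq (b ^ 2 - 4 * c) two_pos
  exact ⟨(-b + s) / 2, (-b - s) / 2, fun z => by linear_combination (1 / 4 : ℂ) * hs⟩

lemma exists_quadratic_root_one_le {b c : ℝ} (h : 1 + b + c ≤ 0) :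
    ∃ x : ℝ, 1 ≤ x ∧ x ^ 2 + b * x + c = 0 := by
  have hd : (b + 2) ^ 2 ≤ b ^ 2 - 4 * c := by linarith
  have hsqrt : |b + 2| ≤ √(b ^ 2 - 4 * c) := Real.abs_le_sqrt hd
  refine ⟨(-b + √(b ^ 2 - 4 * c)) / 2, by linarith [le_abs_self (b + 2)], ?_⟩
  linear_combination (1 / 4 : ℝ) * Real.sq_sqrt ((sq_nonneg _).trans hd)

lemma abs_lt_one_of_quadratic_eq_zero {x b c : ℝ} (hc : c < 1) (h₁ : 0 < 1 + b + c)
    (h₂ : 0 < 1 - b + c) (hx : x ^ 2 + b * x + c = 0) : |x| < 1 := by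
  rw [abs_lt]
  constructor <;> nlinarith

lemma norm_lt_one_of_quadratic_eq_zero {b c : ℝ} (hc : c < 1) (h₁ : 0 < 1 + b + c)
    (h₂ : 0 < 1 - b + c) {z : ℂ} (hz : z ^ 2 + b * z + c = 0) : ‖z‖ < 1 := by
  have hre := congrArg Complex.re hz
  have him := congrArg Complex.im hz
  simp only [Complex.add_re, Complex.add_im, Complex.mul_re, Complex.mul_im, sq,
    Complex.ofReal_re, Complex.ofReal_im, Complex.zero_re, Complex.zero_im] at hre him
  replace him : z.im * (2 * z.re + b) = 0 := by linear_combination him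
  rw [← sq_lt_one_iff₀ (norm_nonneg z), Complex.sq_norm, Complex.normSq_apply]
  rcases mul_eq_zero.mp him with hreal | hpair
  · have := abs_lt_one_of_quadratic_eq_zero (x := z.re) hc h₁ h₂
      (by rw [hreal] at hre; linear_combination hre)
    rw [hreal]
    nlinarith [abs_lt.mp this]
  · -- non-real roots are conjugate, so `‖z‖² = c`
    nlinarith

lemma one_add_add_pos_of_forall_norm_lt_one {b c : ℝ}
    (h : ∀ z : ℂ, z ^ 2 + b * z + c = 0 → ‖z‖ < 1) : 0 < 1 + b + c := by
  by_contra! hle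
  obtain ⟨x, hx₁, hx⟩ := exists_quadratic_root_one_le hle
  have := h x (by exact_mod_cast hx)
  rw [Complex.norm_real, Real.norm_eq_abs] at this
  linarith [le_abs_self x]

lemma quadratic_forall_norm_lt_one_iff (b c : ℝ) :
    (∀ z : ℂ, z ^ 2 + b * z + c = 0 → ‖z‖ < 1) ↔ c < 1 ∧ 0 < 1 + b + c ∧ 0 < 1 - b + c := by
  refine ⟨fun h => ⟨?_, one_add_add_pos_of_forall_norm_lt_one h, ?_⟩, ?_⟩
  · obtain ⟨z₁, z₂, hfac⟩ := Complex.exists_quadratic_eq_mul b c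
    have hc : (c : ℂ) = z₁ * z₂ := by simpa using hfac 0
    have : ‖(c : ℂ)‖ < 1 := by
      rw [hc, norm_mul]
      exact mul_lt_one_of_nonneg_of_lt_one_left (norm_nonneg _) (h z₁ (by simp [hfac]))
        (h z₂ (by simp [hfac])).le
    rw [Complex.norm_real, Real.norm_eq_abs] at this
    exact (le_abs_self c).trans_lt this
  · refine sub_eq_add_neg 1 b ▸ one_add_add_pos_of_forall_norm_lt_one fun z hz => ?_
    rw [← norm_neg]
    exact h (-z) (by push_cast at hz ⊢; linear_combination hz)
  · rintro ⟨hc, h₁, h₂⟩ z hz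
    exact norm_lt_one_of_quadratic_eq_zero hc h₁ h₂ hz

/- With `p = (x - r)(x² + bx + rb)`, the hypotheses say `p(1) > 0`, `p(-1) < 0` and
`1 - c₃² + c₁c₃ > 0` for `c₁ = r - b`, `c₃ = r²b`. -/
lemma lt_one_of_schurCohn_factored {r b : ℝ} (h₁ : 0 < (1 - r) * (1 + b + r * b))
    (h₂ : 0 < (1 + r) * (1 - b + r * b)) (h₃ : 0 < (1 - r * b) * (1 + r * b + r ^ 3 * b)) :
    r < 1 := by
  by_contra! hr
  have hq₁ : 1 + b + r * b < 0 := neg_of_mul_pos_right h₁ (by linarith)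
  have hq₂ : 0 < 1 - b + r * b := pos_of_mul_pos_right h₂ (by linarith)
  have hs : r * b < 0 := mul_neg_of_pos_of_neg (by linarith) (by linarith)
  have h : 0 < 1 + r * b + r ^ 3 * b := pos_of_mul_pos_right h₃ (by linarith)
  -- `(1 + r) h + (1 + r²) r (-q(1)) = 1 - r³`
  nlinarith [mul_pos (by linarith : (0 : ℝ) < 1 + r) h,
    mul_pos (by positivity : (0 : ℝ) < (1 + r ^ 2) * r) (neg_pos.mpr hq₁),
    one_le_pow₀ (n := 3) hr]

lemma schurCohn_factored_iff (r b : ℝ) :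
    (|r| < 1 ∧ r * b < 1 ∧ 0 < 1 + b + r * b ∧ 0 < 1 - b + r * b) ↔
      |r - b + r ^ 2 * b| < 1 ∧ |(r - b) * (r ^ 2 * b)| < 1 - (r ^ 2 * b) ^ 2 := by
  have e₁ : 1 - (r - b + r ^ 2 * b) = (1 - r) * (1 + b + r * b) := by ring
  have e₂ : 1 + (r - b + r ^ 2 * b) = (1 + r) * (1 - b + r * b) := by ring
  have e₃ : 1 - (r ^ 2 * b) ^ 2 + (r - b) * (r ^ 2 * b) =
      (1 - r * b) * (1 + r * b + r ^ 3 * b) := by ring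
  have e₄ : 1 - (r ^ 2 * b) ^ 2 - (r - b) * (r ^ 2 * b) =
      1 - r * b + r * b * (1 + r * b) * (1 - r ^ 2) := by ring
  simp only [abs_lt]
  constructor
  · rintro ⟨⟨hr₁, hr₂⟩, hs, hq₁, hq₂⟩
    have hr₃ : 0 < 1 - r ^ 3 ∧ 0 < 1 + r ^ 3 := by constructor <;> nlinarith [sq_nonneg r]
    have h₃ : 0 < 1 + r * b + r ^ 3 * b := by
      nlinarith [mul_pos hr₃.1 hq₂, mul_pos hr₃.2 hq₁]
    have h₄ : 0 < 1 - r * b + r * b * (1 + r * b) * (1 - r ^ 2) := by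
      have hs₁ : 0 ≤ 1 + r * b := by linarith
      rcases le_or_gt 0 (r * b) with hs₀ | hs₀
      · nlinarith [mul_nonneg (mul_nonneg hs₀ hs₁) (by nlinarith : (0 : ℝ) ≤ 1 - r ^ 2)]
      · nlinarith [mul_nonneg (mul_nonneg (neg_nonneg.mpr hs₀.le) hs₁) (sq_nonneg r)]
    refine ⟨⟨?_, ?_⟩, ?_, ?_⟩
    · linarith [mul_pos (by linarith : (0 : ℝ) < 1 + r) hq₂]
    · linarith [mul_pos (by linarith : (0 : ℝ) < 1 - r) hq₁]
    · linarith [mul_pos (sub_pos.mpr hs) h₃]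
    · linarith
  · rintro ⟨⟨h₂, h₁⟩, h₃, -⟩
    have p₁ : 0 < (1 - r) * (1 + b + r * b) := by linarith
    have p₂ : 0 < (1 + r) * (1 - b + r * b) := by linarith
    have p₃ : 0 < (1 - r * b) * (1 + r * b + r ^ 3 * b) := by linarith
    have hr₁ : r < 1 := lt_one_of_schurCohn_factored p₁ p₂ p₃
    have hr₂ : -1 < r := by
      have := lt_one_of_schurCohn_factored (r := -r) (b := -b) (by linarith) (by linarith)
        (by linarith)
      linarith
    have hq₁ : 0 < 1 + b + r * b := pos_of_mul_pos_right p₁ (by linarith)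
    have hq₂ : 0 < 1 - b + r * b := pos_of_mul_pos_right p₂ (by linarith)
    refine ⟨⟨hr₂, hr₁⟩, ?_, hq₁, hq₂⟩
    by_contra! hs
    nlinarith [mul_nonneg (sub_nonneg.mpr hs) (sq_nonneg r)]

/-- The Schur–Cohn stability criterion (Eq. (35) of the paper): every complex
root `λ` of `λ³ − c₁ λ² − c₃` satisfies `|λ| < 1` if and only if
`|c₁ + c₃| < 1` and `|c₁ c₃| < 1 − c₃²`. -/
theorem stmt18 (c₁ c₃ : ℝ) :
    (∀ lam : ℂ, lam ^ 3 - (c₁ : ℂ) * lam ^ 2 - (c₃ : ℂ) = 0 → ‖lam‖ < 1)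
      ↔ (|c₁ + c₃| < 1 ∧ |c₁ * c₃| < 1 - c₃ ^ 2) := by
  obtain ⟨r, b, rfl, rfl⟩ := exists_cubic_factorization c₁ c₃
  have hfactor : ∀ z : ℂ, z ^ 3 - ((r - b : ℝ) : ℂ) * z ^ 2 - ((r ^ 2 * b : ℝ) : ℂ) =
      (z - r) * (z ^ 2 + b * z + ((r * b : ℝ) : ℂ)) := fun z => by push_cast; ring
  simp only [hfactor, mul_eq_zero, or_imp, forall_and, sub_eq_zero, forall_eq,
    Complex.norm_real, Real.norm_eq_abs, quadratic_forall_norm_lt_one_iff]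
  exact schurCohn_factored_iff r b
end
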